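/- Let n, m, k be natural numbers with 1 ≤ k ≤ m, let U ⊆ ℝ^{1+n} be a bounded open set, let L : ℝ^{1+n} × ℝ^m × ℝ^{m(1+n)} → ℝ be smooth (a first-order Lagrangian density), let φ : ℝ^{1+n} → ℝ^m be smooth, and let A^α_a : ℝ^{1+n} × ℝ^m × ℝ^{m(1+n)} → ℝ (α = 1,…,k, a = 1,…,m) be smooth functions such that the k × m matrix (A^α_a(x, φ(x), Dφ(x))) has rank k for every x ∈ U. Then the following are equivalent: (i) for every smooth V : ℝ^{1+n} → ℝ^m with compact support contained in U satisfying Σ_a A^α_a(x, φ(x), Dφ(x)) V^a(x) = 0 for all x ∈ U and α = 1,…,k, one has ∫_U Σ_a EL_a[φ](x) V^a(x) dx = 0; (ii) there exist smooth functions λ_1,…,λ_k : U → ℝ such that EL_a[φ](x) = Σ_α λ_α(x) A^α_a(x, φ(x), Dφ(x)) for all x ∈ U and a = 1,…,m. -/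

import Mathlib

open MeasureTheory

/-- Partial derivative of a scalar function on `ℝ^N` along the `μ`-th coordinate. -/
noncomputable def pdCoord {N : ℕ} (f : (Fin N → ℝ) → ℝ) (μ : Fin N) (x : Fin N → ℝ) : ℝ :=
  fderiv ℝ f x (Pi.single μ 1)

/-- The matrix `Dφ` of first partial derivatives `∂φ^a/∂x^μ` of a field
`φ : ℝ^{1+n} → ℝ^m`. -/
noncomputable def jetD {n m : ℕ} (φ : (Fin (n + 1) → ℝ) → (Fin m → ℝ))
    (x : Fin (n + 1) → ℝ) : Fin m → Fin (n + 1) → ℝ :=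
  fun a μ => fderiv ℝ φ x (Pi.single μ 1) a

/-- Partial derivative `∂L/∂y^a` of a first-order Lagrangian density. -/
noncomputable def pdY {n m : ℕ}
    (L : (Fin (n + 1) → ℝ) → (Fin m → ℝ) → (Fin m → Fin (n + 1) → ℝ) → ℝ)
    (a : Fin m) (x : Fin (n + 1) → ℝ) (y : Fin m → ℝ) (z : Fin m → Fin (n + 1) → ℝ) : ℝ :=
  fderiv ℝ (fun y' => L x y' z) y (Pi.single a 1)

/-- Partial derivative `∂L/∂z^a_μ` of a first-order Lagrangian density. -/
noncomputable def pdZ {n m : ℕ}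
    (L : (Fin (n + 1) → ℝ) → (Fin m → ℝ) → (Fin m → Fin (n + 1) → ℝ) → ℝ)
    (a : Fin m) (μ : Fin (n + 1)) (x : Fin (n + 1) → ℝ) (y : Fin m → ℝ)
    (z : Fin m → Fin (n + 1) → ℝ) : ℝ :=
  fderiv ℝ (fun z' => L x y z') z (Pi.single a (Pi.single μ 1))

/-- The Euler–Lagrange expression
`EL_a[φ](x) = (∂L/∂y^a)(j¹φ(x)) − Σ_μ ∂/∂x^μ [(∂L/∂z^a_μ)(j¹φ(x))]`. -/
noncomputable def eulerLagrange {n m : ℕ}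
    (L : (Fin (n + 1) → ℝ) → (Fin m → ℝ) → (Fin m → Fin (n + 1) → ℝ) → ℝ)
    (φ : (Fin (n + 1) → ℝ) → (Fin m → ℝ)) (a : Fin m) (x : Fin (n + 1) → ℝ) : ℝ :=
  pdY L a x (φ x) (jetD φ x)
    - ∑ μ : Fin (n + 1), pdCoord (fun x' => pdZ L a μ x' (φ x') (jetD φ x')) μ x

open Matrix
open scoped ContDiff

/-!
Write `B(x)` for the constraint matrix `A(x, j¹φ(x))` and `e(x)` for the Euler–Lagrange vector.
Full rank makes the Gram matrix `B Bᵀ` invertible on `U`, with smooth inverse by Cramer's rule, so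
the multipliers `λ = (B Bᵀ)⁻¹ B e` are smooth and `w = e - λ B` is the orthogonal projection of `e`
onto `ker B`. For every bump function `g` supported in `U`, `g • w` is an admissible variation, and
stationarity says that `e ⬝ w = |w|²` integrates to zero against `g`. By the fundamental lemma of
the calculus of variations `w = 0` on `U`, i.e. `e = λ B`. Conversely `(λ B) ⬝ V = λ ⬝ (B V) = 0`
pointwise for admissible `V`.
-/

section Smoothness

variable {𝕜 E : Type*} [NontriviallyNormedField 𝕜] [NormedAddCommGroup E] [NormedSpace 𝕜 E]
  {s : Set E} {N : WithTop ℕ∞} {ι κ ν : Type*} [Fintype ι]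

theorem ContDiffOn.matrix_mulVec [Fintype κ] {M : E → Matrix κ ι 𝕜} {v : E → ι → 𝕜}
    (hM : ∀ i j, ContDiffOn 𝕜 N (fun x => M x i j) s) (hv : ContDiffOn 𝕜 N v s) :
    ContDiffOn 𝕜 N (fun x => M x *ᵥ v x) s :=
  contDiffOn_pi.2 fun i => ContDiffOn.sum fun j _ => (hM i j).mul (contDiffOn_pi.1 hv j)

theorem ContDiffOn.matrix_vecMul [Fintype κ] {M : E → Matrix ι κ 𝕜} {v : E → ι → 𝕜}
    (hM : ∀ i j, ContDiffOn 𝕜 N (fun x => M x i j) s) (hv : ContDiffOn 𝕜 N v s) :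
    ContDiffOn 𝕜 N (fun x => v x ᵥ* M x) s :=
  contDiffOn_pi.2 fun j => ContDiffOn.sum fun i _ => (contDiffOn_pi.1 hv i).mul (hM i j)

theorem ContDiffOn.matrix_mul {M : E → Matrix κ ι 𝕜} {M' : E → Matrix ι ν 𝕜}
    (hM : ∀ i j, ContDiffOn 𝕜 N (fun x => M x i j) s)
    (hM' : ∀ i j, ContDiffOn 𝕜 N (fun x => M' x i j) s) (i : κ) (j : ν) :
    ContDiffOn 𝕜 N (fun x => (M x * M' x) i j) s :=
  ContDiffOn.sum fun l _ => (hM i l).mul (hM' l j)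

theorem ContDiffOn.matrix_det [DecidableEq ι] {M : E → Matrix ι ι 𝕜}
    (hM : ∀ i j, ContDiffOn 𝕜 N (fun x => M x i j) s) :
    ContDiffOn 𝕜 N (fun x => (M x).det) s := by
  simp only [det_apply, Units.smul_def, zsmul_eq_mul]
  exact ContDiffOn.sum fun σ _ => contDiffOn_const.mul (contDiffOn_prod fun i _ => hM (σ i) i)

theorem ContDiffOn.matrix_adjugate [DecidableEq ι] {M : E → Matrix ι ι 𝕜}
    (hM : ∀ i j, ContDiffOn 𝕜 N (fun x => M x i j) s) (i j : ι) :
    ContDiffOn 𝕜 N (fun x => (M x).adjugate i j) s := by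
  simp only [adjugate_apply]
  refine ContDiffOn.matrix_det fun i' j' => ?_
  by_cases h : i' = j
  · simpa only [updateRow_apply, h, if_true] using contDiffOn_const
  · simpa only [updateRow_apply, h, if_false] using hM i' j'

theorem ContDiffOn.matrix_inv [DecidableEq ι] {M : E → Matrix ι ι 𝕜}
    (hM : ∀ i j, ContDiffOn 𝕜 N (fun x => M x i j) s) (hdet : ∀ x ∈ s, IsUnit (M x).det)
    (i j : ι) : ContDiffOn 𝕜 N (fun x => (M x)⁻¹ i j) s := by
  simp only [inv_def, Ring.inverse_eq_inv', Matrix.smul_apply, smul_eq_mul]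
  exact ((ContDiffOn.matrix_det hM).inv fun x hx => (hdet x hx).ne_zero).mul
    (ContDiffOn.matrix_adjugate hM i j)

theorem ContDiffOn.smul_of_tsupport_subset {F : Type*} [NormedAddCommGroup F] [NormedSpace 𝕜 F]
    {ρ : E → 𝕜} {w : E → F} (hs : IsOpen s) (hρ : ContDiff 𝕜 N ρ) (hw : ContDiffOn 𝕜 N w s)
    (hρs : tsupport ρ ⊆ s) : ContDiff 𝕜 N fun x => ρ x • w x := by
  refine contDiff_iff_contDiffAt.2 fun x => ?_
  by_cases hx : x ∈ s
  · exact hρ.contDiffAt.smul (hw.contDiffAt (hs.mem_nhds hx))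
  · have hx' : x ∉ tsupport fun x => ρ x • w x := fun h =>
      hx (hρs (tsupport_smul_subset_left _ _ h))
    exact contDiffAt_const.congr_of_eventuallyEq (notMem_tsupport_iff_eventuallyEq.1 hx')

end Smoothness

namespace Matrix

variable {ι κ : Type*} [Fintype ι] [Fintype κ] [DecidableEq κ]

theorem isUnit_det_mul_transpose_of_rank_eq {R : Type*} [Field R] [LinearOrder R]
    [IsStrictOrderedRing R] {B : Matrix κ ι R} (h : B.rank = Fintype.card κ) :
    IsUnit (B * Bᵀ).det := by
  have hrange : LinearMap.range (B * Bᵀ).mulVecLin = ⊤ := by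
    apply Submodule.eq_top_of_finrank_eq
    rw [← rank, rank_self_mul_transpose, h, Module.finrank_fintype_fun_eq_card]
  exact (isUnit_iff_isUnit_det _).1
    (mulVec_surjective_iff_isUnit.1 (LinearMap.range_eq_top.1 hrange))

theorem mulVec_sub_vecMul_gram_inv_eq_zero {R : Type*} [CommRing R] {B : Matrix κ ι R}
    (hB : IsUnit (B * Bᵀ).det) (e : ι → R) :
    B *ᵥ (e - ((B * Bᵀ)⁻¹ *ᵥ (B *ᵥ e)) ᵥ* B) = 0 := by
  rw [mulVec_sub, ← mulVec_transpose, mulVec_mulVec, mulVec_mulVec,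
    mul_nonsing_inv _ hB, one_mulVec, sub_self]

end Matrix

section EulerLagrange

variable {n m : ℕ} {L : (Fin (n + 1) → ℝ) → (Fin m → ℝ) → (Fin m → Fin (n + 1) → ℝ) → ℝ}
  {φ : (Fin (n + 1) → ℝ) → (Fin m → ℝ)}

theorem contDiff_jetD (hφ : ContDiff ℝ ∞ φ) : ContDiff ℝ ∞ (jetD φ) :=
  contDiff_pi.2 fun a => contDiff_pi.2 fun _ => (contDiff_apply ℝ ℝ a).comp
    ((hφ.fderiv_right le_rfl).clm_apply contDiff_const)

theorem contDiff_pdCoord {N : ℕ} {f : (Fin N → ℝ) → ℝ} (hf : ContDiff ℝ ∞ f) (μ : Fin N) :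
    ContDiff ℝ ∞ (pdCoord f μ) :=
  (hf.fderiv_right le_rfl).clm_apply contDiff_const

variable (hL : ContDiff ℝ ∞
      (fun q : (Fin (n + 1) → ℝ) × (Fin m → ℝ) × (Fin m → Fin (n + 1) → ℝ) => L q.1 q.2.1 q.2.2))
  (hφ : ContDiff ℝ ∞ φ)
include hL hφ

theorem contDiff_pdY_comp_jet (a : Fin m) :
    ContDiff ℝ ∞ fun x => pdY L a x (φ x) (jetD φ x) :=
  ContDiff.fderiv_apply (f := fun x y => L x y (jetD φ x))
    (hL.comp (contDiff_fst.prodMk (contDiff_snd.prodMk ((contDiff_jetD hφ).comp contDiff_fst))))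
    hφ contDiff_const le_rfl

theorem contDiff_pdZ_comp_jet (a : Fin m) (μ : Fin (n + 1)) :
    ContDiff ℝ ∞ fun x => pdZ L a μ x (φ x) (jetD φ x) :=
  ContDiff.fderiv_apply (f := fun x z => L x (φ x) z)
    (hL.comp (contDiff_fst.prodMk ((hφ.comp contDiff_fst).prodMk contDiff_snd)))
    (contDiff_jetD hφ) contDiff_const le_rfl

theorem contDiff_eulerLagrange (a : Fin m) : ContDiff ℝ ∞ (eulerLagrange L φ a) :=
  (contDiff_pdY_comp_jet hL hφ a).sub
    (ContDiff.sum fun μ _ => contDiff_pdCoord (contDiff_pdZ_comp_jet hL hφ a μ) μ)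

end EulerLagrange

section ConstrainedVariations

variable {E : Type*} [MeasurableSpace E] {μ : Measure E} {U : Set E} {ι κ : Type*} [Fintype ι]
  [Fintype κ] {B : E → Matrix κ ι ℝ} {e : E → ι → ℝ}

theorem setIntegral_dotProduct_eq_zero_of_eq_vecMul (hU : MeasurableSet U) {l : E → κ → ℝ}
    (hl : ∀ x ∈ U, e x = l x ᵥ* B x) {V : E → ι → ℝ} (hV : ∀ x ∈ U, B x *ᵥ V x = 0) :
    ∫ x in U, e x ⬝ᵥ V x ∂μ = 0 := by
  rw [setIntegral_congr_fun hU (g := fun _ => 0) fun x hx => ?_, integral_zero]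
  rw [hl x hx, ← dotProduct_mulVec, hV x hx, dotProduct_zero]

variable [NormedAddCommGroup E] [NormedSpace ℝ E] [FiniteDimensional ℝ E] [BorelSpace E]
  [IsLocallyFiniteMeasure μ] [μ.IsOpenPosMeasure]

theorem IsOpen.eqOn_zero_of_integral_contDiff_smul_eq_zero {F : Type*} [NormedAddCommGroup F]
    [NormedSpace ℝ F] [CompleteSpace F] {f : E → F} (hU : IsOpen U) (hf : ContinuousOn f U)
    (h : ∀ g : E → ℝ, ContDiff ℝ ∞ g → HasCompactSupport g → tsupport g ⊆ U →
      ∫ x, g x • f x ∂μ = 0) :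
    Set.EqOn f 0 U :=
  Measure.eqOn_open_of_ae_eq ((ae_restrict_iff' hU.measurableSet).2
    (hU.ae_eq_zero_of_integral_contDiff_smul_eq_zero (hf.locallyIntegrableOn hU.measurableSet) h))
    hU hf continuousOn_const

theorem IsOpen.exists_vecMul_eq_of_setIntegral_dotProduct_eq_zero [DecidableEq κ] (hU : IsOpen U)
    (hB : ∀ i j, ContDiffOn ℝ ∞ (fun x => B x i j) U)
    (hrank : ∀ x ∈ U, (B x).rank = Fintype.card κ) (he : ContDiffOn ℝ ∞ e U)
    (h : ∀ V : E → ι → ℝ, ContDiff ℝ ∞ V → HasCompactSupport V → tsupport V ⊆ U →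
      (∀ x ∈ U, B x *ᵥ V x = 0) → ∫ x in U, e x ⬝ᵥ V x ∂μ = 0) :
    ∃ l : E → κ → ℝ, ContDiffOn ℝ ∞ l U ∧ ∀ x ∈ U, e x = l x ᵥ* B x := by
  have hdet : ∀ x ∈ U, IsUnit (B x * (B x)ᵀ).det := fun x hx =>
    isUnit_det_mul_transpose_of_rank_eq (hrank x hx)
  set l : E → κ → ℝ := fun x => (B x * (B x)ᵀ)⁻¹ *ᵥ (B x *ᵥ e x)
  have hl : ContDiffOn ℝ ∞ l U :=
    ContDiffOn.matrix_mulVec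
      (ContDiffOn.matrix_inv (ContDiffOn.matrix_mul hB fun i j => hB j i) hdet)
      (ContDiffOn.matrix_mulVec hB he)
  set w : E → ι → ℝ := fun x => e x - l x ᵥ* B x
  have hw : ContDiffOn ℝ ∞ w U := he.sub (ContDiffOn.matrix_vecMul hB hl)
  have hBw : ∀ x ∈ U, B x *ᵥ w x = 0 := fun x hx =>
    mulVec_sub_vecMul_gram_inv_eq_zero (hdet x hx) (e x)
  have hew : ∀ x ∈ U, e x ⬝ᵥ w x = w x ⬝ᵥ w x := fun x hx => by
    have hlw : (l x ᵥ* B x) ⬝ᵥ w x = 0 := by rw [← dotProduct_mulVec, hBw x hx, dotProduct_zero]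
    calc e x ⬝ᵥ w x = (w x + l x ᵥ* B x) ⬝ᵥ w x := by rw [sub_add_cancel]
      _ = w x ⬝ᵥ w x := by rw [add_dotProduct, hlw, add_zero]
  have hew_zero : Set.EqOn (fun x => e x ⬝ᵥ w x) 0 U := by
    refine hU.eqOn_zero_of_integral_contDiff_smul_eq_zero (μ := μ)
      (continuousOn_finsetSum _ fun a _ =>
        (continuousOn_pi.1 he.continuousOn a).mul (continuousOn_pi.1 hw.continuousOn a))
      fun g hg hgc hgU => ?_
    have hgV := h (fun x => g x • w x) (hw.smul_of_tsupport_subset hU hg hgU) hgc.smul_right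
      ((tsupport_smul_subset_left _ _).trans hgU)
      fun x hx => by rw [mulVec_smul, hBw x hx, smul_zero]
    simp only [dotProduct_smul] at hgV
    rwa [setIntegral_eq_integral_of_forall_compl_eq_zero fun x hx => by
      rw [image_eq_zero_of_notMem_tsupport fun hx' => hx (hgU hx'), zero_smul]] at hgV
  refine ⟨l, hl, fun x hx => sub_eq_zero.1 (dotProduct_self_eq_zero.1 ?_)⟩
  exact (hew x hx).symm.trans (hew_zero hx)

end ConstrainedVariations

theorem nonholonomic_euler_lagrange_equivalence
    (n m k : ℕ)
    (U : Set (Fin (n + 1) → ℝ)) (hUopen : IsOpen U)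
    (L : (Fin (n + 1) → ℝ) → (Fin m → ℝ) → (Fin m → Fin (n + 1) → ℝ) → ℝ)
    (hL : ContDiff ℝ (⊤ : ℕ∞)
      (fun q : (Fin (n + 1) → ℝ) × (Fin m → ℝ) × (Fin m → Fin (n + 1) → ℝ) =>
        L q.1 q.2.1 q.2.2))
    (φ : (Fin (n + 1) → ℝ) → (Fin m → ℝ)) (hφ : ContDiff ℝ (⊤ : ℕ∞) φ)
    (A : Fin k → Fin m →
      (Fin (n + 1) → ℝ) → (Fin m → ℝ) → (Fin m → Fin (n + 1) → ℝ) → ℝ)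
    (hA : ∀ α a, ContDiff ℝ (⊤ : ℕ∞)
      (fun q : (Fin (n + 1) → ℝ) × (Fin m → ℝ) × (Fin m → Fin (n + 1) → ℝ) =>
        A α a q.1 q.2.1 q.2.2))
    (hrank : ∀ x ∈ U,
      (Matrix.of fun α a => A α a x (φ x) (jetD φ x)).rank = k) :
    ((∀ V : (Fin (n + 1) → ℝ) → (Fin m → ℝ), ContDiff ℝ (⊤ : ℕ∞) V →
        HasCompactSupport V → tsupport V ⊆ U →
        (∀ x ∈ U, ∀ α, ∑ a, A α a x (φ x) (jetD φ x) * V x a = 0) →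
        (∫ x in U, ∑ a, eulerLagrange L φ a x * V x a) = 0)
      ↔ (∃ lam : Fin k → (Fin (n + 1) → ℝ) → ℝ,
          (∀ α, ContDiffOn ℝ (⊤ : ℕ∞) (lam α) U) ∧
          ∀ x ∈ U, ∀ a,
            eulerLagrange L φ a x = ∑ α, lam α x * A α a x (φ x) (jetD φ x))) := by
  set B : (Fin (n + 1) → ℝ) → Matrix (Fin k) (Fin m) ℝ :=
    fun x => Matrix.of fun α a => A α a x (φ x) (jetD φ x)
  have hB : ∀ α a, ContDiffOn ℝ ∞ (fun x => B x α a) U := fun α a =>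
    ((hA α a).comp (contDiff_id.prodMk (hφ.prodMk (contDiff_jetD hφ)))).contDiffOn
  have hEL : ContDiffOn ℝ ∞ (fun x a => eulerLagrange L φ a x) U :=
    contDiffOn_pi.2 fun a => (contDiff_eulerLagrange hL hφ a).contDiffOn
  constructor
  · intro hstat
    obtain ⟨l, hl, hEL_eq⟩ := hUopen.exists_vecMul_eq_of_setIntegral_dotProduct_eq_zero hB
      (fun x hx => (hrank x hx).trans (Fintype.card_fin k).symm) hEL
      fun V hV hVc hVU hBV => hstat V hV hVc hVU fun x hx => congrFun (hBV x hx)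
    exact ⟨fun α x => l x α, contDiffOn_pi.1 hl, fun x hx => congrFun (hEL_eq x hx)⟩
  · rintro ⟨lam, hlam, hEL_eq⟩ V - - - hBV
    exact setIntegral_dotProduct_eq_zero_of_eq_vecMul (B := B) (l := fun x α => lam α x)
      hUopen.measurableSet (fun x hx => funext (hEL_eq x hx)) fun x hx => funext (hBV x hx)
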